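/- arXiv:2003.01209 — 3 statements merged into one kernel-verified Lean document; each statement's English description precedes it below -/
import Mathlib

section
/- For α, β > -1 and n ≥ 0, the log orthogonal function S_n^{(α,β)} satisfies the Sturm–Liouville equation: (-log t)^{-α} · t^{-β} · d/dt[ (-log t)^{α+1} · t^{β+2} · d/dt S_n^{(α,β)}(t) ] + n·(β+1)·S_n^{(α,β)}(t) = 0 for all t ∈ (0,1). -/
open MeasureTheory Real Set

/-- Generalized Laguerre polynomials via the three-term recurrence. -/
noncomputable def lag (α : ℝ) : ℕ → ℝ → ℝ
  | 0, _ => 1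
  | 1, y => -y + α + 1
  | n+2, y => ((2*((n:ℝ)+1)+α+1-y) * lag α (n+1) y - ((n:ℝ)+1+α) * lag α n y) / ((n:ℝ)+2)

/-- Log orthogonal functions `S_n^{(α,β)}(t) = L_n^{(α)}(-(β+1) log t)`. -/
noncomputable def LOF (α β : ℝ) (n : ℕ) (t : ℝ) : ℝ :=
  lag α n (-(β+1) * Real.log t)

/-!
Put `y = -(β + 1) log t`. Since `dy/dt = -(β + 1)/t`, differentiating the flux
`(-log t)^(α+1) t^(β+2) S'(t) = -(β + 1) (-log t)^(α+1) t^(β+1) L'(y)` produces exactly the factor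
`(β + 1) (-log t)^α t^β`, so the Sturm–Liouville operator in `t` becomes `β + 1` times the
Laguerre operator `y L'' + (α + 1 - y) L'` in `y`. So it suffices that the Laguerre polynomials
solve `y L_n'' + (α + 1 - y) L_n' + n L_n = 0`; this is a polynomial identity, obtained by
induction from the three-term recurrence and `y L_{n+1}' = (n + 1) L_{n+1} - (n + 1 + α) L_n`.
-/

open Polynomial Filter Topology

namespace Polynomial

variable {K : Type*} [Field K]

noncomputable def laguerre (α : K) : ℕ → K[X]
  | 0 => 1
  | 1 => C α + 1 - X
  | n + 2 => C ((n + 2 : K)⁻¹) *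
      ((2 * (n : K[X]) + 3 + C α - X) * laguerre α (n + 1) - ((n : K[X]) + 1 + C α) * laguerre α n)

@[simp] theorem laguerre_zero (α : K) : laguerre α 0 = 1 := rfl

@[simp] theorem laguerre_one (α : K) : laguerre α 1 = C α + 1 - X := rfl

variable [CharZero K]

theorem laguerre_add_two (α : K) (n : ℕ) :
    ((n : K[X]) + 2) * laguerre α (n + 2) =
      (2 * (n : K[X]) + 3 + C α - X) * laguerre α (n + 1) - ((n : K[X]) + 1 + C α) * laguerre α n := by
  have h : ((n : K[X]) + 2) * C ((n + 2 : K)⁻¹) = 1 := by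
    rw [← C_eq_natCast, ← C_ofNat, ← C_add, ← C_mul,
      mul_inv_cancel₀ (by exact_mod_cast (n + 1).succ_ne_zero), C_1]
  rw [laguerre, ← mul_assoc, h, one_mul]

theorem derivative_laguerre_add_two (α : K) (n : ℕ) :
    ((n : K[X]) + 2) * derivative (laguerre α (n + 2)) =
      (2 * (n : K[X]) + 3 + C α - X) * derivative (laguerre α (n + 1)) - laguerre α (n + 1)
        - ((n : K[X]) + 1 + C α) * derivative (laguerre α n) := by
  have h := congrArg derivative (laguerre_add_two α n)
  simp only [derivative_mul, derivative_add, derivative_sub, derivative_natCast, derivative_ofNat,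
    derivative_one, derivative_C, derivative_X] at h
  linear_combination h

theorem derivative_derivative_laguerre_add_two (α : K) (n : ℕ) :
    ((n : K[X]) + 2) * derivative (derivative (laguerre α (n + 2))) =
      (2 * (n : K[X]) + 3 + C α - X) * derivative (derivative (laguerre α (n + 1)))
        - 2 * derivative (laguerre α (n + 1))
        - ((n : K[X]) + 1 + C α) * derivative (derivative (laguerre α n)) := by
  have h := congrArg derivative (derivative_laguerre_add_two α n)
  simp only [derivative_mul, derivative_add, derivative_sub, derivative_natCast, derivative_ofNat,
    derivative_one, derivative_C, derivative_X] at h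
  linear_combination h

theorem X_mul_derivative_laguerre_succ (α : K) (n : ℕ) :
    X * derivative (laguerre α (n + 1)) =
      ((n : K[X]) + 1) * laguerre α (n + 1) - ((n : K[X]) + 1 + C α) * laguerre α n := by
  induction n using Nat.twoStepInduction with
  | zero =>
    simp only [zero_add, Nat.cast_zero, laguerre_zero, laguerre_one, derivative_sub, derivative_add,
      derivative_C, derivative_one, derivative_X]
    ring
  | one =>
    have h := derivative_laguerre_add_two α 0
    have h₂ := laguerre_add_two α 0
    simp only [Nat.cast_zero, zero_add, laguerre_zero, laguerre_one, derivative_one,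
      derivative_sub, derivative_add, derivative_C, derivative_X] at h h₂ ⊢
    refine mul_left_cancel₀ (two_ne_zero : (2 : K[X]) ≠ 0) ?_
    linear_combination X * h - 2 * h₂
  | more n ih₀ ih₁ =>
    have hD := derivative_laguerre_add_two α (n + 1)
    have h₁ := laguerre_add_two α (n + 1)
    have h₀ := laguerre_add_two α n
    push_cast at hD h₁ h₀ ih₁ ⊢
    refine mul_left_cancel₀ (by norm_cast : (n : K[X]) + 3 ≠ 0) ?_
    linear_combination X * hD + (2 * (n : K[X]) + 5 + C α - X) * ih₁ - ((n : K[X]) + 2 + C α) * ih₀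
        - ((n : K[X]) + 3) * h₁ + ((n : K[X]) + 2 + C α) * h₀

theorem laguerre_ode (α : K) (n : ℕ) :
    X * derivative (derivative (laguerre α n)) + (C α + 1 - X) * derivative (laguerre α n)
      + (n : K[X]) * laguerre α n = 0 := by
  induction n using Nat.twoStepInduction with
  | zero => simp
  | one => simp
  | more n ih₀ ih₁ =>
    have hDD := derivative_derivative_laguerre_add_two α n
    have hD := derivative_laguerre_add_two α n
    have h := laguerre_add_two α n
    have hX := X_mul_derivative_laguerre_succ α n
    push_cast at ih₁ ⊢
    refine mul_left_cancel₀ (by norm_cast : (n : K[X]) + 2 ≠ 0) ?_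
    linear_combination X * hDD + (C α + 1 - X) * hD + ((n : K[X]) + 2) * h
        + (2 * (n : K[X]) + 3 + C α - X) * ih₁ - ((n : K[X]) + 1 + C α) * ih₀ - 2 * hX

end Polynomial

theorem eval_laguerre (α : ℝ) (n : ℕ) (y : ℝ) : (laguerre α n).eval y = lag α n y := by
  induction n using Nat.twoStepInduction with
  | zero => simp [lag]
  | one => simp [lag]; ring
  | more n ih₀ ih₁ =>
    simp only [laguerre, lag, eval_mul, eval_C, eval_sub, eval_add, eval_ofNat, eval_natCast,
      eval_X, eval_one, ih₀, ih₁]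
    rw [inv_mul_eq_div]
    ring

section LogarithmicChangeOfVariable

variable {f f' f'' : ℝ → ℝ} {α β : ℝ}

theorem hasDerivAt_comp_neg_mul_log (hf : ∀ y, HasDerivAt f (f' y) y) {x : ℝ} (hx : x ≠ 0) :
    HasDerivAt (fun x => f (-(β + 1) * log x)) (f' (-(β + 1) * log x) * (-(β + 1) * x⁻¹)) x :=
  (hf _).comp x ((hasDerivAt_log hx).const_mul _)

theorem rpow_mul_deriv_comp_neg_mul_log (hf : ∀ y, HasDerivAt f (f' y) y) {x : ℝ} (hx : 0 < x) :
    (-log x) ^ (α + 1) * x ^ (β + 2) * deriv (fun x => f (-(β + 1) * log x)) x =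
      -(β + 1) * ((-log x) ^ (α + 1) * (x ^ (β + 1) * f' (-(β + 1) * log x))) := by
  rw [(hasDerivAt_comp_neg_mul_log hf hx.ne').deriv, show β + 2 = β + 1 + 1 by ring,
    rpow_add_one hx.ne']
  field_simp

theorem hasDerivAt_neg_log_rpow_mul_rpow_mul (hf' : ∀ y, HasDerivAt f' (f'' y) y) {t : ℝ}
    (ht : t ∈ Ioo 0 1) :
    HasDerivAt (fun x => -(β + 1) * ((-log x) ^ (α + 1) * (x ^ (β + 1) * f' (-(β + 1) * log x))))
      ((β + 1) * (-log t) ^ α * t ^ β * ((-(β + 1) * log t) * f'' (-(β + 1) * log t)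
        + (α + 1 - -(β + 1) * log t) * f' (-(β + 1) * log t))) t := by
  have hlog : 0 < -log t := neg_pos.2 (log_neg ht.1 ht.2)
  have hL : HasDerivAt (fun x => (-log x) ^ (α + 1)) ((α + 1) * (-log t) ^ α * -t⁻¹) t := by
    refine ((hasDerivAt_log ht.1.ne').neg.rpow_const (p := α + 1) (Or.inl hlog.ne')).congr_deriv ?_
    rw [add_sub_cancel_right, Pi.neg_apply]
    ring
  have hP : HasDerivAt (fun x => x ^ (β + 1)) ((β + 1) * t ^ β) t := by
    simpa using hasDerivAt_rpow_const (p := β + 1) (Or.inl ht.1.ne')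
  refine ((hL.mul (hP.mul (hasDerivAt_comp_neg_mul_log hf' ht.1.ne'))).const_mul
    (-(β + 1))).congr_deriv ?_
  simp only [Pi.mul_apply]
  rw [rpow_add_one hlog.ne', rpow_add_one ht.1.ne']
  generalize f' (-(β + 1) * log t) = a, f'' (-(β + 1) * log t) = b
  have ht₀ := ht.1.ne'
  field_simp
  ring

theorem sturm_liouville_comp_neg_mul_log (hf : ∀ y, HasDerivAt f (f' y) y)
    (hf' : ∀ y, HasDerivAt f' (f'' y) y) {μ : ℝ}
    (hode : ∀ y, y * f'' y + (α + 1 - y) * f' y + μ * f y = 0) {t : ℝ} (ht : t ∈ Ioo 0 1) :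
    (-log t) ^ (-α) * t ^ (-β) *
        deriv (fun x => (-log x) ^ (α + 1) * x ^ (β + 2) * deriv (fun x => f (-(β + 1) * log x)) x) t
      + μ * (β + 1) * f (-(β + 1) * log t) = 0 := by
  have hflux : (fun x => (-log x) ^ (α + 1) * x ^ (β + 2) * deriv (fun x => f (-(β + 1) * log x)) x)
      =ᶠ[𝓝 t] fun x => -(β + 1) * ((-log x) ^ (α + 1) * (x ^ (β + 1) * f' (-(β + 1) * log x))) :=
    eventually_of_mem (Ioi_mem_nhds ht.1) fun x hx => rpow_mul_deriv_comp_neg_mul_log hf hx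
  have hlog : 0 < -log t := neg_pos.2 (log_neg ht.1 ht.2)
  rw [hflux.deriv_eq, (hasDerivAt_neg_log_rpow_mul_rpow_mul hf' ht).deriv, rpow_neg hlog.le,
    rpow_neg ht.1.le]
  have hode_t := hode (-(β + 1) * log t)
  generalize f (-(β + 1) * log t) = a, f' (-(β + 1) * log t) = b, f'' (-(β + 1) * log t) = c at hode_t ⊢
  have h1 := (rpow_pos_of_pos hlog α).ne'
  have h2 := (rpow_pos_of_pos ht.1 β).ne'
  field_simp
  linear_combination (β + 1) * hode_t

end LogarithmicChangeOfVariable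

theorem lof_sturm_liouville_general (α β : ℝ) (n : ℕ) :
    ∀ t ∈ Set.Ioo (0:ℝ) 1,
      (-Real.log t) ^ (-α) * t ^ (-β) *
          deriv (fun x => (-Real.log x) ^ (α+1) * x ^ (β+2) * deriv (LOF α β n) x) t
        + (n:ℝ) * (β + 1) * LOF α β n t = 0 := by
  intro t ht
  have hLOF : LOF α β n = fun t => (laguerre α n).eval (-(β + 1) * log t) := by
    funext t
    rw [LOF, eval_laguerre]
  rw [hLOF]
  exact sturm_liouville_comp_neg_mul_log (laguerre α n).hasDerivAt
    (derivative (laguerre α n)).hasDerivAt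
    (fun y => by simpa using congrArg (eval y) (laguerre_ode α n)) ht

/-- Sturm–Liouville equation for the log orthogonal functions. -/
theorem lof_sturm_liouville (α β : ℝ) (hα : -1 < α) (hβ : -1 < β) (n : ℕ) :
    ∀ t ∈ Set.Ioo (0:ℝ) 1,
      (-Real.log t) ^ (-α) * t ^ (-β) *
          deriv (fun x => (-Real.log x) ^ (α+1) * x ^ (β+2) * deriv (LOF α β n) x) t
        + (n:ℝ) * (β + 1) * LOF α β n t = 0 :=
  lof_sturm_liouville_general α β n
end

section
/- Let s > 0 and α > -1. Then for every n ∈ ℕ, ∫₀^∞ e^{-sy} y^α L_n^{(α)}(y) dy = (Γ(α+n+1)/Γ(n+1)) · (1 − 1/s)^n · s^{-α-1}. -/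
open MeasureTheory Real Set

/-!
Up to the factor `Γ(α+n+1)/Γ(n+1)`, `L_n^{(α)}(y)` is the polynomial `scaledLaguerre α n`,
`Q_n(y) = ∑ₖ C(n,k) (-y)^k / Γ(α+k+1)`: both sides satisfy the same three-term recurrence, which
for `Q_n` is, coefficientwise, an identity between binomial coefficients. Integrating `Q_n`
term by term, each `Γ(α+k+1)` cancels against `∫₀^∞ e^{-sy} y^{α+k} dy = Γ(α+k+1) s^{-α-k-1}`,
leaving `s^{-α-1} ∑ₖ C(n,k) (-1/s)^k = s^{-α-1} (1 - 1/s)^n`.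
-/

open Polynomial

/- This holds at the poles as well, because Mathlib sets `Γ` to `0` there. -/
theorem Real.inv_Gamma_eq_self_mul_inv_Gamma_add_one (x : ℝ) :
    (Gamma x)⁻¹ = x * (Gamma (x + 1))⁻¹ := by
  rcases eq_or_ne x 0 with rfl | hx
  · simp
  · rw [Gamma_add_one hx, ← div_eq_mul_inv, div_mul_cancel_left₀ hx]

theorem Nat.cast_choose_laguerre_recurrence {R : Type*} [CommRing R] (a : R) (n k : ℕ) :
    (a + n + 2) * ((n + 2).choose (k + 1) : R)
      = (2 * n + a + 3) * ((n + 1).choose (k + 1) : R) + (a + k + 1) * ((n + 1).choose k : R)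
        - (n + 1) * (n.choose (k + 1) : R) := by
  have pascal₁ : ((n + 2).choose (k + 1) : R) = (n + 1).choose k + (n + 1).choose (k + 1) := by
    rw [Nat.choose_succ_succ', Nat.cast_add]
  have pascal₀ : ((n + 1).choose (k + 1) : R) = n.choose k + n.choose (k + 1) := by
    rw [Nat.choose_succ_succ', Nat.cast_add]
  rcases le_or_gt k (n + 1) with hk | hk
  · have h := congrArg (Nat.cast (R := R)) (Nat.choose_mul_succ_eq n k)
    push_cast [Nat.cast_sub hk] at h
    linear_combination (a + n + 2) * pascal₁ - (n + 1) * pascal₀ - h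
  · rw [Nat.choose_eq_zero_of_lt (by omega : n + 2 < k + 1),
      Nat.choose_eq_zero_of_lt (by omega : n + 1 < k + 1), Nat.choose_eq_zero_of_lt hk,
      Nat.choose_eq_zero_of_lt (by omega : n < k + 1)]
    simp

noncomputable def scaledLaguerre (α : ℝ) (n : ℕ) : ℝ[X] :=
  ∑ k ∈ Finset.range (n + 1), C ((n.choose k : ℝ) * (-1) ^ k * (Gamma (α + k + 1))⁻¹) * X ^ k

theorem coeff_scaledLaguerre (α : ℝ) (n k : ℕ) :
    (scaledLaguerre α n).coeff k = (n.choose k : ℝ) * (-1) ^ k * (Gamma (α + k + 1))⁻¹ := by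
  simp only [scaledLaguerre, finsetSum_coeff, coeff_C_mul_X_pow, Finset.sum_ite_eq,
    Finset.mem_range]
  split_ifs with hk
  · rfl
  · rw [Nat.choose_eq_zero_of_lt (by omega), Nat.cast_zero, zero_mul, zero_mul]

theorem eval_scaledLaguerre (α y : ℝ) (n : ℕ) :
    (scaledLaguerre α n).eval y
      = ∑ k ∈ Finset.range (n + 1), (n.choose k : ℝ) * (-1) ^ k * (Gamma (α + k + 1))⁻¹ * y ^ k := by
  simp [scaledLaguerre, eval_finsetSum]

theorem scaledLaguerre_add_two (α : ℝ) (n : ℕ) :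
    C (α + n + 2) * scaledLaguerre α (n + 2)
      = (C (2 * n + α + 3) - X) * scaledLaguerre α (n + 1) - C ((n : ℝ) + 1) * scaledLaguerre α n := by
  ext (_ | k)
  · simp only [coeff_sub, coeff_C_mul, sub_mul, coeff_X_mul_zero, coeff_scaledLaguerre,
      Nat.choose_zero_right, Nat.cast_one]
    ring
  · simp only [coeff_sub, coeff_C_mul, sub_mul, coeff_X_mul, coeff_scaledLaguerre]
    rw [inv_Gamma_eq_self_mul_inv_Gamma_add_one (α + k + 1)]
    push_cast
    rw [show α + (k + 1 : ℝ) + 1 = α + k + 1 + 1 by ring]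
    linear_combination
      (-1) ^ (k + 1) * (Gamma (α + k + 1 + 1))⁻¹ * Nat.cast_choose_laguerre_recurrence α n k

theorem Gamma_add_succ_div_Gamma_succ {α : ℝ} (hα : -1 < α) (n : ℕ) :
    Gamma (α + ↑(n + 1) + 1) / Gamma (↑(n + 1) + 1)
      = (α + n + 1) / (n + 1) * (Gamma (α + n + 1) / Gamma (n + 1)) := by
  have hn : (0 : ℝ) ≤ n := n.cast_nonneg
  rw [Nat.cast_succ, show α + (n + 1 : ℝ) + 1 = α + n + 1 + 1 by ring,
    Gamma_add_one (show α + n + 1 ≠ 0 by linarith), Gamma_add_one (show (n : ℝ) + 1 ≠ 0 by linarith)]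
  have : Gamma (n + 1) ≠ 0 := (Gamma_pos_of_pos (by linarith)).ne'
  field_simp

theorem lag_eq_mul_eval_scaledLaguerre {α : ℝ} (hα : -1 < α) (n : ℕ) (y : ℝ) :
    lag α n y = Gamma (α + n + 1) / Gamma (n + 1) * (scaledLaguerre α n).eval y := by
  induction n using Nat.twoStepInduction with
  | zero =>
    simp [lag, eval_scaledLaguerre, (Gamma_pos_of_pos (by linarith : 0 < α + 1)).ne']
  | one =>
    have hα₁ : α + 1 ≠ 0 := by linarith
    have hΓ : Gamma (α + 1) ≠ 0 := (Gamma_pos_of_pos (by linarith)).ne'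
    rw [lag, eval_scaledLaguerre, Finset.sum_range_succ, Finset.sum_range_one]
    norm_num [Gamma_add_one hα₁]
    field_simp
    ring
  | more n ih₀ ih₁ =>
    have hrec := congrArg (eval y) (scaledLaguerre_add_two α n)
    simp only [eval_mul, eval_sub, eval_C, eval_X] at hrec
    simp only [lag, ih₀, ih₁, Gamma_add_succ_div_Gamma_succ hα (n + 1),
      Gamma_add_succ_div_Gamma_succ hα n]
    generalize Gamma (α + n + 1) / Gamma (n + 1) = g
    push_cast
    field_simp
    linear_combination -(α + n + 1) * (n + 2) * g * hrec

theorem integral_exp_neg_mul_mul_rpow {s p : ℝ} (hs : 0 < s) (hp : -1 < p) :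
    ∫ y in Ioi (0 : ℝ), exp (-s * y) * y ^ p = (1 / s) ^ (p + 1) * Gamma (p + 1) := by
  rw [← integral_rpow_mul_exp_neg_mul_Ioi (by linarith) hs]
  refine setIntegral_congr_fun measurableSet_Ioi fun y _ => ?_
  rw [add_sub_cancel_right, neg_mul, mul_comm]

theorem integrableOn_exp_neg_mul_mul_rpow {s p : ℝ} (hs : 0 < s) (hp : -1 < p) :
    IntegrableOn (fun y : ℝ => exp (-s * y) * y ^ p) (Ioi 0) := by
  refine (integrableOn_rpow_mul_exp_neg_mul_rpow hp zero_lt_one hs).congr_fun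
    (fun y _ => ?_) measurableSet_Ioi
  dsimp only
  rw [rpow_one, mul_comm]

theorem integral_exp_neg_mul_mul_rpow_mul_sum {s α : ℝ} (hs : 0 < s) (hα : -1 < α)
    (c : ℕ → ℝ) (t : Finset ℕ) :
    ∫ y in Ioi (0 : ℝ), exp (-s * y) * y ^ α * ∑ k ∈ t, c k * y ^ k
      = ∑ k ∈ t, c k * ((1 / s) ^ (α + k + 1) * Gamma (α + k + 1)) := by
  have hαk : ∀ k : ℕ, -1 < α + k := fun k => by linarith [k.cast_nonneg (α := ℝ)]
  calc ∫ y in Ioi (0 : ℝ), exp (-s * y) * y ^ α * ∑ k ∈ t, c k * y ^ k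
      = ∫ y in Ioi (0 : ℝ), ∑ k ∈ t, c k * (exp (-s * y) * y ^ (α + k)) := by
        refine setIntegral_congr_fun measurableSet_Ioi fun y hy => ?_
        simp only [Finset.mul_sum, rpow_add hy, rpow_natCast]
        exact Finset.sum_congr rfl fun k _ => by ring
    _ = ∑ k ∈ t, c k * ((1 / s) ^ (α + k + 1) * Gamma (α + k + 1)) := by
        rw [integral_finsetSum _ fun k _ =>
          (integrableOn_exp_neg_mul_mul_rpow hs (hαk k)).const_mul _]
        refine Finset.sum_congr rfl fun k _ => ?_
        rw [integral_const_mul, integral_exp_neg_mul_mul_rpow hs (hαk k)]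

theorem integral_exp_neg_mul_mul_rpow_mul_eval_scaledLaguerre {s α : ℝ} (hs : 0 < s)
    (hα : -1 < α) (n : ℕ) :
    ∫ y in Ioi (0 : ℝ), exp (-s * y) * y ^ α * (scaledLaguerre α n).eval y
      = (1 - 1 / s) ^ n * s ^ (-α - 1) := by
  simp only [eval_scaledLaguerre, integral_exp_neg_mul_mul_rpow_mul_sum hs hα]
  have hpow : ∀ k : ℕ, (1 / s) ^ (α + k + 1) = s ^ (-α - 1) * (1 / s) ^ k := fun k => by
    rw [add_right_comm, rpow_add (by positivity), rpow_natCast, one_div, inv_rpow hs.le,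
      ← rpow_neg hs.le, neg_add']
  calc _ = ∑ k ∈ Finset.range (n + 1), s ^ (-α - 1) * ((-(1 / s)) ^ k * 1 ^ (n - k) * n.choose k) :=
        Finset.sum_congr rfl fun k _ => by
          have : Gamma (α + k + 1) ≠ 0 :=
            (Gamma_pos_of_pos (by linarith [k.cast_nonneg (α := ℝ)])).ne'
          rw [hpow]
          field_simp
          ring
    _ = (1 - 1 / s) ^ n * s ^ (-α - 1) := by
        rw [← Finset.mul_sum, ← add_pow, neg_add_eq_sub, mul_comm]

/-- Laplace-type integral of a generalized Laguerre polynomial. -/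
theorem laguerre_laplace_integral (s α : ℝ) (hs : 0 < s) (hα : -1 < α) (n : ℕ) :
    ∫ y in Set.Ioi (0:ℝ), Real.exp (-s*y) * y ^ α * lag α n y
      = Real.Gamma (α + (n:ℝ) + 1) / Real.Gamma ((n:ℝ) + 1)
        * (1 - 1/s) ^ n * s ^ (-α - 1) := by
  simp only [lag_eq_mul_eval_scaledLaguerre hα, mul_left_comm _ (Gamma _ / Gamma _)]
  rw [integral_const_mul, integral_exp_neg_mul_mul_rpow_mul_eval_scaledLaguerre hs hα, mul_assoc]
end

section
/- Let r ≥ 0 and β > -1 with β ≠ 2r. The coefficients of f(t) = t^r in the expansion f = Σ_n f̂_n S_n^{(0,β,0)} with respect to the generalized log orthogonal functions with α = λ = 0 are given by f̂_n = ((s−1)/s)^n · s^{-1}, where s = (β + 2r + 2)/(2β + 2); equivalently f̂_n = (2β+2)/(β+2r+2) · ((2r−β)/(2r+2+β))^n. -/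
open MeasureTheory Real Set

/-- Generalized log orthogonal functions `S_n^{(α,β,λ)}(t) = t^{(β-λ)/2} S_n^{(α,β)}(t)`. -/
noncomputable def GLOF (α β lam : ℝ) (n : ℕ) (t : ℝ) : ℝ :=
  t ^ ((β - lam)/2) * LOF α β n t

/-! Substituting `t = exp (-y / (β + 1))` turns the coefficient into the Laplace transform
`∫₀^∞ e^{-sy} L_n(y) dy` at `s = (β + 2r + 2) / (2β + 2)`. Integrating the explicit expansion
`L_n(y) = ∑ₖ C(n,k) (-y)^k / k!` termwise against `e^{-sy}` gives `∑ₖ C(n,k) (-1)^k / s^(k+1)`,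
which is `(1 - 1/s)^n / s` by the binomial theorem. -/

section

open Finset

lemma cast_choose_three_term (n j : ℕ) (hj : j ≤ n + 1) :
    ((n : ℝ) + 2) * (n + 2).choose (j + 1) =
      (2 * (n : ℝ) + 3) * (n + 1).choose (j + 1) + ((j : ℝ) + 1) * (n + 1).choose j
        - ((n : ℝ) + 1) * n.choose (j + 1) := by
  have pascal₂ : ((n + 2).choose (j + 1) : ℝ) = (n + 1).choose j + (n + 1).choose (j + 1) := by
    exact_mod_cast Nat.choose_succ_succ (n + 1) j
  have pascal₁ : ((n + 1).choose (j + 1) : ℝ) = n.choose j + n.choose (j + 1) := by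
    exact_mod_cast Nat.choose_succ_succ n j
  have absorb : (n.choose j : ℝ) * ((n : ℝ) + 1) = (n + 1).choose j * ((n : ℝ) + 1 - j) := by
    have h : ((n.choose j * (n + 1) : ℕ) : ℝ) = ((n + 1).choose j * (n + 1 - j) : ℕ) := by
      rw [Nat.choose_mul_succ_eq]
    push_cast [Nat.cast_sub hj] at h
    exact h
  linear_combination ((n : ℝ) + 2) * pascal₂ - ((n : ℝ) + 1) * pascal₁ - absorb

lemma sum_range_choose_mul_eq_sum_succ (g : ℕ → ℝ) {n m : ℕ} (h : n ≤ m) :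
    ∑ k ∈ range (n + 1), (n.choose k : ℝ) * g k
      = ∑ j ∈ range m, (n.choose (j + 1) : ℝ) * g (j + 1) + g 0 := by
  have extend : ∑ k ∈ range (n + 1), (n.choose k : ℝ) * g k
      = ∑ k ∈ range (m + 1), (n.choose k : ℝ) * g k := by
    refine sum_subset (range_subset_range.mpr (by omega)) fun k _ hk => ?_
    rw [Nat.choose_eq_zero_of_lt (by simpa using hk), Nat.cast_zero, zero_mul]
  rw [extend, sum_range_succ', Nat.choose_zero_right, Nat.cast_one, one_mul]

lemma mul_pow_div_factorial (y : ℝ) (k : ℕ) :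
    y * ((-y) ^ k / k.factorial) = -(((k : ℝ) + 1) * ((-y) ^ (k + 1) / (k + 1).factorial)) := by
  rw [Nat.factorial_succ, pow_succ]
  push_cast
  field_simp

theorem lag_zero_eq_sum (n : ℕ) (y : ℝ) :
    lag 0 n y = ∑ k ∈ range (n + 1), (n.choose k : ℝ) * ((-y) ^ k / k.factorial) := by
  induction n using Nat.twoStepInduction with
  | zero => simp [lag]
  | one => simp [lag, sum_range_succ]; ring
  | more n ih₀ ih₁ =>
    rw [lag, ih₀, ih₁, div_eq_iff (by positivity)]
    set g : ℕ → ℝ := fun k => (-y) ^ k / k.factorial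
    have hg₀ : g 0 = 1 := by simp [g]
    have shift : y * ∑ k ∈ range (n + 2), ((n + 1).choose k : ℝ) * g k
        = -∑ j ∈ range (n + 2), ((j : ℝ) + 1) * (n + 1).choose j * g (j + 1) := by
      rw [mul_sum, ← sum_neg_distrib]
      refine sum_congr rfl fun j _ => ?_
      rw [mul_left_comm, mul_pow_div_factorial]
      ring
    have coeff : ∀ j ∈ range (n + 2),
        (2 * (n : ℝ) + 3) * ((n + 1).choose (j + 1) * g (j + 1))
          + ((j : ℝ) + 1) * (n + 1).choose j * g (j + 1)
          - ((n : ℝ) + 1) * (n.choose (j + 1) * g (j + 1))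
        = ((n : ℝ) + 2) * ((n + 2).choose (j + 1) * g (j + 1)) := fun j hj => by
      linear_combination
        -g (j + 1) * cast_choose_three_term n j (by simpa [Nat.lt_succ_iff] using hj)
    have total := sum_congr rfl coeff
    rw [sum_sub_distrib, sum_add_distrib, ← mul_sum, ← mul_sum, ← mul_sum] at total
    have e₀ := sum_range_choose_mul_eq_sum_succ g (by omega : n ≤ n + 2)
    have e₁ := sum_range_choose_mul_eq_sum_succ g (by omega : n + 1 ≤ n + 2)
    have e₂ := sum_range_choose_mul_eq_sum_succ g (le_refl (n + 2))
    rw [hg₀] at e₀ e₁ e₂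
    linear_combination (2 * (n : ℝ) + 3) * e₁ - shift - ((n : ℝ) + 1) * e₀
      - ((n : ℝ) + 2) * e₂ + total

lemma integral_pow_mul_exp_neg_mul_Ioi (k : ℕ) {s : ℝ} (hs : 0 < s) :
    ∫ y in Ioi (0 : ℝ), y ^ k * exp (-(s * y)) = k.factorial / s ^ (k + 1) := by
  have h := integral_rpow_mul_exp_neg_mul_Ioi (a := k + 1) (by positivity) hs
  rw [add_sub_cancel_right, Gamma_nat_eq_factorial, one_div, inv_rpow hs.le] at h
  simp only [rpow_natCast] at h
  rw [h]
  norm_cast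
  field_simp

lemma integrableOn_pow_mul_exp_neg_mul_Ioi (k : ℕ) {s : ℝ} (hs : 0 < s) :
    IntegrableOn (fun y : ℝ => y ^ k * exp (-(s * y))) (Ioi 0) :=
  .of_integral_ne_zero (by rw [integral_pow_mul_exp_neg_mul_Ioi k hs]; positivity)

theorem integral_exp_neg_mul_mul_lag_zero (n : ℕ) {s : ℝ} (hs : 0 < s) :
    ∫ y in Ioi (0 : ℝ), exp (-(s * y)) * lag 0 n y = (1 - 1 / s) ^ n / s := by
  have expand : ∀ y, exp (-(s * y)) * lag 0 n y
      = ∑ k ∈ range (n + 1), ((n.choose k : ℝ) * (-1) ^ k / k.factorial)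
          * (y ^ k * exp (-(s * y))) := fun y => by
    rw [lag_zero_eq_sum, mul_sum]
    refine sum_congr rfl fun k _ => ?_
    rw [neg_pow]
    ring
  simp_rw [expand]
  rw [integral_finsetSum _ fun k _ => (integrableOn_pow_mul_exp_neg_mul_Ioi k hs).const_mul _]
  simp_rw [integral_const_mul, integral_pow_mul_exp_neg_mul_Ioi _ hs]
  rw [show 1 - 1 / s = -(1 / s) + 1 by ring, add_pow, sum_div]
  refine sum_congr rfl fun k _ => ?_
  rw [neg_pow (1 / s), div_pow, one_pow, one_pow, pow_succ]
  field_simp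

end

lemma image_exp_neg_div_Ioi {c : ℝ} (hc : 0 < c) :
    (fun y => exp (-(y / c))) '' Ioi 0 = Ioo 0 1 := by
  ext t
  simp only [mem_image, mem_Ioi, mem_Ioo]
  constructor
  · rintro ⟨y, hy, rfl⟩
    exact ⟨exp_pos _, exp_lt_one_iff.mpr (by simpa using div_pos hy hc)⟩
  · rintro ⟨ht₀, ht₁⟩
    refine ⟨-c * log t, mul_pos_of_neg_of_neg (neg_lt_zero.mpr hc) (log_neg ht₀ ht₁), ?_⟩
    rw [neg_mul, neg_div, mul_div_cancel_left₀ _ hc.ne', neg_neg, exp_log ht₀]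

theorem integral_Ioo_rpow_mul_comp_neg_mul_log {c : ℝ} (hc : 0 < c) (a : ℝ) (F : ℝ → ℝ) :
    ∫ t in Ioo (0 : ℝ) 1, t ^ a * F (-c * log t)
      = c⁻¹ * ∫ y in Ioi (0 : ℝ), exp (-((a + 1) / c * y)) * F y := by
  have deriv : ∀ y ∈ Ioi (0 : ℝ),
      HasDerivWithinAt (fun y => exp (-(y / c))) (-(exp (-(y / c)) / c)) (Ioi 0) y :=
    fun y _ => by
      simpa [neg_div, div_eq_mul_inv, mul_comm] using
        (((hasDerivAt_id y).div_const c).neg.exp).hasDerivWithinAt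
  have inj : InjOn (fun y => exp (-(y / c))) (Ioi 0) := fun y _ z _ h => by
    simpa [hc.ne'] using exp_injective h
  rw [← image_exp_neg_div_Ioi hc, integral_image_eq_integral_abs_deriv_smul measurableSet_Ioi
    deriv inj, ← integral_const_mul]
  refine setIntegral_congr_fun measurableSet_Ioi fun y _ => ?_
  have hlog : -c * -(y / c) = y := by field_simp
  rw [abs_neg, abs_of_pos (by positivity), smul_eq_mul, ← exp_mul, log_exp, hlog,
    div_eq_inv_mul, mul_assoc, ← mul_assoc (exp _), ← exp_add,
    show -(y / c) + -(y / c) * a = -((a + 1) / c * y) by ring]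

theorem glof_coefficients_power_general (r β : ℝ) (hr : 0 ≤ r) (hβ : -1 < β) :
    ∀ n : ℕ,
      (β + 1) * ∫ t in Set.Ioo (0:ℝ) 1, t ^ r * GLOF 0 β 0 n t
        = (((β + 2*r + 2)/(2*β + 2) - 1)/((β + 2*r + 2)/(2*β + 2))) ^ n
            * ((β + 2*r + 2)/(2*β + 2))⁻¹ ∧
      (β + 1) * ∫ t in Set.Ioo (0:ℝ) 1, t ^ r * GLOF 0 β 0 n t
        = (2*β + 2)/(β + 2*r + 2) * ((2*r - β)/(2*r + 2 + β)) ^ n := by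
  intro n
  set s := (β + 2*r + 2)/(2*β + 2) with hs_def
  have hβ₁ : 0 < β + 1 := by linarith
  have hs : 0 < s := div_pos (by linarith) (by linarith)
  have integrand : EqOn (fun t => t ^ r * GLOF 0 β 0 n t)
      (fun t => t ^ (r + β / 2) * lag 0 n (-(β + 1) * log t)) (Ioo 0 1) := fun t ht => by
    simp only [GLOF, LOF]
    rw [sub_zero, ← mul_assoc, ← rpow_add ht.1]
  have exponent : (r + β / 2 + 1) / (β + 1) = s := by
    rw [hs_def]; field_simp; ring
  have coeff : (β + 1) * ∫ t in Ioo (0:ℝ) 1, t ^ r * GLOF 0 β 0 n t = (1 - 1 / s) ^ n / s := by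
    rw [setIntegral_congr_fun measurableSet_Ioo integrand,
      integral_Ioo_rpow_mul_comp_neg_mul_log hβ₁, exponent,
      integral_exp_neg_mul_mul_lag_zero n hs, mul_inv_cancel_left₀ hβ₁.ne']
  refine ⟨by rw [coeff, sub_div, div_self hs.ne', div_eq_mul_inv], ?_⟩
  have inv_s : 1 / s = (2*β + 2)/(β + 2*r + 2) := one_div_div _ _
  have ratio : 1 - 1 / s = (2*r - β)/(2*r + 2 + β) := by
    rw [inv_s, one_sub_div (by linarith)]
    ring_nf
  rw [coeff, ratio, div_eq_mul_one_div _ s, inv_s, mul_comm]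

/-- Explicit GLOF expansion coefficients of `f(t) = t^r` for `α = λ = 0`. -/
theorem glof_coefficients_power (r β : ℝ) (hr : 0 ≤ r) (hβ : -1 < β) (hne : β ≠ 2*r) :
    ∀ n : ℕ,
      (β + 1) * ∫ t in Set.Ioo (0:ℝ) 1, t ^ r * GLOF 0 β 0 n t
        = (((β + 2*r + 2)/(2*β + 2) - 1)/((β + 2*r + 2)/(2*β + 2))) ^ n
            * ((β + 2*r + 2)/(2*β + 2))⁻¹ ∧
      (β + 1) * ∫ t in Set.Ioo (0:ℝ) 1, t ^ r * GLOF 0 β 0 n t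
        = (2*β + 2)/(β + 2*r + 2) * ((2*r - β)/(2*r + 2 + β)) ^ n :=
  glof_coefficients_power_general r β hr hβ
end
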